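/- arXiv:2212.03751 — 4 statements merged into one kernel-verified Lean document; each statement's English description precedes it below -/
import Mathlib

section
/- Let N ≥ 1, τ ∈ (0,∞], and let a_j, c_j : [0,τ) → ℂ (1 ≤ j ≤ N) with each c_j differentiable, such that for all t ∈ [0,τ) and all j ≠ k one has sinh(π(a_j(t) − a_k(t))/(2δ)) ≠ 0 and the equations c_j' = 2i·Σ_{k≠j} (c_j − c_k)·V(a_j − a_k) hold. Then the sum Σ_{j=1}^N c_j(t) is constant on [0,τ), i.e. Σ_{j=1}^N c_j(t) = Σ_{j=1}^N c_j(0) for all t ∈ [0,τ). -/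
open MeasureTheory Filter Finset ComplexConjugate

noncomputable section

/-- `α(z) = (π/(2δ)) coth(πz/(2δ))`. -/
def cmAlpha (δ : ℝ) (z : ℂ) : ℂ :=
  ((Real.pi / (2 * δ) : ℝ) : ℂ) *
    (Complex.cosh ((Real.pi : ℂ) * z / (2 * (δ : ℂ))) /
     Complex.sinh ((Real.pi : ℂ) * z / (2 * (δ : ℂ))))

/-- `V(z) = (π/(2δ))² / sinh(πz/(2δ))²`. -/
def cmV (δ : ℝ) (z : ℂ) : ℂ :=
  ((Real.pi / (2 * δ) : ℝ) : ℂ) ^ 2 / Complex.sinh ((Real.pi : ℂ) * z / (2 * (δ : ℂ))) ^ 2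

/-- `V'(z) = -2 (π/(2δ))³ cosh(πz/(2δ)) / sinh(πz/(2δ))³`. -/
def cmV' (δ : ℝ) (z : ℂ) : ℂ :=
  -2 * ((Real.pi / (2 * δ) : ℝ) : ℂ) ^ 3 *
    Complex.cosh ((Real.pi : ℂ) * z / (2 * (δ : ℂ))) /
    Complex.sinh ((Real.pi : ℂ) * z / (2 * (δ : ℂ))) ^ 3

/-- real hyperbolic cotangent -/
def rcoth (y : ℝ) : ℝ := Real.cosh y / Real.sinh y

/-- `(T g)(x) = L`: the principal-value limit defining the operator `T` exists and equals `L`. -/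
def HasPV (δ : ℝ) (g : ℝ → ℂ) (x : ℝ) (L : ℂ) : Prop :=
  Tendsto (fun ε : ℝ =>
      (1 / (2 * (δ : ℂ))) *
        ∫ x' in {x' : ℝ | ε ≤ |x' - x|},
          ((rcoth (Real.pi * (x' - x) / (2 * δ)) : ℝ) : ℂ) * g x')
    (nhdsWithin 0 (Set.Ioi 0)) (nhds L)

/-- kernel of the operator `T̃`. -/
def TtKer (δ : ℝ) (x x' : ℝ) : ℝ := Real.tanh (Real.pi * (x' - x) / (2 * δ))

/-- the operator `T̃`. -/
def Ttilde (δ : ℝ) (g : ℝ → ℂ) (x : ℝ) : ℂ :=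
  (1 / (2 * (δ : ℂ))) * ∫ x', ((TtKer δ x x' : ℝ) : ℂ) * g x'

/-- `x' ↦ ∂_{x'} |w(x',t)|²`. -/
def sqAbsDeriv (w : ℝ → ℝ → ℂ) (t x' : ℝ) : ℝ :=
  deriv (fun y => ‖w y t‖ ^ 2) x'

/-- The intermediate mixed Manakov (IMM) system holds for the pair `(u,v)` at the point `(x,t)`,
including existence of the relevant principal-value limits and integrals. -/
def IMMat (δ : ℝ) (u v : ℝ → ℝ → ℂ) (x t : ℝ) : Prop :=
  ∃ Tu Tv : ℂ,
    HasPV δ (fun x' => ((sqAbsDeriv u t x' : ℝ) : ℂ)) x Tu ∧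
    HasPV δ (fun x' => ((sqAbsDeriv v t x' : ℝ) : ℂ)) x Tv ∧
    Integrable (fun x' => ((TtKer δ x x' : ℝ) : ℂ) * ((sqAbsDeriv u t x' : ℝ) : ℂ)) ∧
    Integrable (fun x' => ((TtKer δ x x' : ℝ) : ℂ) * ((sqAbsDeriv v t x' : ℝ) : ℂ)) ∧
    Complex.I * deriv (fun s => u x s) t =
      deriv (fun y => deriv (fun z => u z t) y) x
        + u x t * (Complex.I * ((sqAbsDeriv u t x : ℝ) : ℂ) + Tu)
        - u x t * Ttilde δ (fun x' => ((sqAbsDeriv v t x' : ℝ) : ℂ)) x ∧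
    Complex.I * deriv (fun s => v x s) t =
      deriv (fun y => deriv (fun z => v z t) y) x
        + v x t * (Complex.I * ((sqAbsDeriv v t x : ℝ) : ℂ) - Tv)
        + v x t * Ttilde δ (fun x' => ((sqAbsDeriv u t x' : ℝ) : ℂ)) x

/-- the time interval `[0, τ)` for `τ ∈ (0, ∞]`. -/
def timeDom (τ : ENNReal) : Set ℝ := {t : ℝ | 0 ≤ t ∧ ENNReal.ofReal t < τ}

/-! Because `V` is even, the terms `(c j - c k) * V (a j - a k)` in the derivatives of the
`c j` cancel in pairs, so `∑ j, c j` has derivative zero on the interval `[0, τ)`. -/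

theorem cmV_neg (δ : ℝ) (z : ℂ) : cmV δ (-z) = cmV δ z := by
  simp only [cmV, mul_neg, neg_div, Complex.sinh_neg, even_two.neg_pow]

theorem timeDom_ordConnected (τ : ENNReal) : (timeDom τ).OrdConnected :=
  ⟨fun _ hx _ hy _ hz => ⟨hx.1.trans hz.1, (ENNReal.ofReal_le_ofReal hz.2).trans_lt hy.2⟩⟩

theorem zero_mem_timeDom {τ : ENNReal} (hτ : 0 < τ) : (0 : ℝ) ∈ timeDom τ :=
  ⟨le_rfl, by simpa using hτ⟩

theorem Convex.eq_of_hasDerivWithinAt_zero {E : Type*} [NormedAddCommGroup E] [NormedSpace ℝ E]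
    {f : ℝ → E} {s : Set ℝ} (hs : Convex ℝ s) (hf : ∀ x ∈ s, HasDerivWithinAt f 0 s x)
    {x y : ℝ} (hx : x ∈ s) (hy : y ∈ s) : f y = f x := by
  simpa [sub_eq_zero] using
    Convex.norm_image_sub_le_of_norm_hasDerivWithin_le (f := f) (f' := fun _ => 0) (C := 0) hf
      (fun _ _ => norm_zero.le) hs hx hy

theorem Finset.sum_sum_sub_mul_eq_zero {ι R : Type*} [Fintype ι] [NonUnitalNonAssocRing R]
    (c : ι → R) (W : ι → ι → R) (hW : ∀ j k, W j k = W k j) :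
    ∑ j, ∑ k, (c j - c k) * W j k = 0 := by
  simp only [sub_mul, Finset.sum_sub_distrib]
  rw [Finset.sum_comm (f := fun j k => c k * W j k)]
  simp only [hW, sub_self]

theorem Finset.sum_sum_erase_sub_mul_eq_zero {ι R : Type*} [Fintype ι] [DecidableEq ι]
    [NonUnitalNonAssocRing R] (c : ι → R) (W : ι → ι → R) (hW : ∀ j k, W j k = W k j) :
    ∑ j, ∑ k ∈ univ.erase j, (c j - c k) * W j k = 0 := by
  rw [← Finset.sum_sum_sub_mul_eq_zero c W hW]
  exact Finset.sum_congr rfl fun j _ => Finset.sum_erase _ (by simp)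

theorem sum_eq_of_hasDerivWithinAt_symmetric_coupling {ι R : Type*} [Fintype ι] [DecidableEq ι]
    [NormedRing R] [NormedSpace ℝ R] {s : Set ℝ} (hs : Convex ℝ s) (κ : R) (c : ι → ℝ → R)
    (W : ℝ → ι → ι → R) (hW : ∀ t ∈ s, ∀ j k, W t j k = W t k j)
    (hc : ∀ j, ∀ t ∈ s,
      HasDerivWithinAt (c j) (κ * ∑ k ∈ univ.erase j, (c j t - c k t) * W t j k) s t)
    {t₀ t : ℝ} (ht₀ : t₀ ∈ s) (ht : t ∈ s) : ∑ j, c j t = ∑ j, c j t₀ := by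
  refine hs.eq_of_hasDerivWithinAt_zero (f := fun t => ∑ j, c j t) (fun r hr => ?_) ht₀ ht
  have hsum := HasDerivWithinAt.fun_sum (u := univ) fun j _ => hc j r hr
  rwa [← Finset.mul_sum, Finset.sum_sum_erase_sub_mul_eq_zero _ _ (hW r hr), mul_zero] at hsum

theorem imm_sum_c_conserved_general
    (δ : ℝ) (N : ℕ)
    (τ : ENNReal) (hτ : 0 < τ)
    (a c : Fin N → ℝ → ℂ)
    (hc : ∀ j, ∀ t ∈ timeDom τ, HasDerivWithinAt (c j)
      (2 * Complex.I * ∑ k ∈ univ.erase j, (c j t - c k t) * cmV δ (a j t - a k t))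
      (timeDom τ) t) :
    ∀ t ∈ timeDom τ, ∑ j, c j t = ∑ j, c j 0 := by
  intro t ht
  refine sum_eq_of_hasDerivWithinAt_symmetric_coupling (timeDom_ordConnected τ).convex _ c
    (fun t j k => cmV δ (a j t - a k t)) (fun t _ j k => ?_) hc (zero_mem_timeDom hτ) ht
  rw [← cmV_neg, neg_sub]

/-- the sum of the residues is conserved under the linear ODEs. -/
theorem imm_sum_c_conserved
    (δ : ℝ) (hδ : 0 < δ) (N : ℕ) (hN : 1 ≤ N)
    (τ : ENNReal) (hτ : 0 < τ)
    (a c : Fin N → ℝ → ℂ)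
    (hsinh : ∀ t ∈ timeDom τ, ∀ j k : Fin N, j ≠ k →
      Complex.sinh ((Real.pi : ℂ) * (a j t - a k t) / (2 * (δ : ℂ))) ≠ 0)
    (hc : ∀ j, ∀ t ∈ timeDom τ, HasDerivWithinAt (c j)
      (2 * Complex.I * ∑ k ∈ univ.erase j, (c j t - c k t) * cmV δ (a j t - a k t))
      (timeDom τ) t) :
    ∀ t ∈ timeDom τ, ∑ j, c j t = ∑ j, c j 0 :=
  imm_sum_c_conserved_general δ N τ hτ a c hc
end
end

section
/- Let N ≥ 1, τ ∈ (0,∞], λ ∈ ℝ, and let a_j, c_j : [0,τ) → ℂ (1 ≤ j ≤ N) with each a_j twice differentiable and each c_j differentiable, satisfying on [0,τ) the hyperbolic Calogero–Moser equations a_j'' = −4·Σ_{k≠j} V'(a_j − a_k) and the linear equations c_j' = 2i·Σ_{k≠j} (c_j − c_k)·V(a_j − a_k); suppose that at t = 0 the Bäcklund relations c_j·a_j' = 2λ + 2i·Σ_{k≠j} c_k·α(a_j − a_k) and the constraints c_j·(λ − i·Σ_{k=1}^N conj(c_k)·α(a_j − conj(a_k) + iδ)) + 1 = 0 hold for all j;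 and suppose the strip condition −3δ/2 < Im a_j(t) < −δ/2 (all j) and the distinctness condition a_j(t) ≠ a_k(t) (all j ≠ k) hold for all t ∈ [0,τ). Then the Bäcklund relations c_j·a_j' = 2λ + 2i·Σ_{k≠j} c_k·α(a_j − a_k) hold for all j at every t ∈ [0,τ). -/
open MeasureTheory Filter Finset ComplexConjugate

noncomputable section

/-!
Along the Calogero–Moser flow the Bäcklund defects
`g_j = c_j a_j' - 2λ - 2i Σ_{k ≠ j} c_k α(a_j - a_k)` satisfy the closed linear system
`g_j' = 2i Σ_{k ≠ j} (g_j - g_k) V(a_j - a_k)`. Besides `α' = -V`, `V' = -2αV` and the parities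
of `α` and `V`, the computation uses only the three-term identity
`V(y) (α(x+y) - α(x)) = V(x) (α(x+y) - α(y))`, which makes the sums over triples of distinct
indices cancel. The strip condition gives `|Im (a_j - a_k)| < δ`, which keeps `a_j - a_k` away
from the poles `2δiℤ` of `V`, so the coefficients are bounded on compact time intervals, and
Grönwall's inequality turns `g(0) = 0` into `g ≡ 0`.
-/

namespace CalogeroMoser

open Complex

section Kernel

variable {δ : ℝ}

theorem sinh_ne_zero_of_abs_im_lt {z : ℂ} (hz : z ≠ 0) (him : |z.im| < 2 * δ) :
    sinh ((Real.pi : ℂ) * z / (2 * (δ : ℂ))) ≠ 0 := by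
  have hδ : 0 < δ := by linarith [abs_nonneg z.im]
  have hδ' : (δ : ℂ) ≠ 0 := ofReal_ne_zero.2 hδ.ne'
  intro h
  obtain ⟨n, hn⟩ := sin_eq_zero_iff.1 (by rw [sin_mul_I, h, zero_mul] :
    sin ((Real.pi : ℂ) * z / (2 * (δ : ℂ)) * I) = 0)
  have hzn : z = ((-(2 * δ * n) : ℝ) : ℂ) * I := by
    field_simp at hn
    push_cast
    linear_combination (-I) * hn + z * I_sq
  have hn0 : n = 0 := by
    rw [hzn, mul_I_im, ofReal_re, abs_neg, abs_mul, abs_of_pos (by positivity : 0 < 2 * δ)] at him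
    have : |(n : ℝ)| < 1 := by nlinarith
    exact Int.abs_lt_one_iff.1 (by exact_mod_cast this)
  exact hz (by simp [hzn, hn0])

theorem sinh_sub_ne_zero_of_mem_strip {z w : ℂ} (hzw : z ≠ w)
    (hz : -(3 * δ) / 2 < z.im ∧ z.im < -δ / 2) (hw : -(3 * δ) / 2 < w.im ∧ w.im < -δ / 2) :
    sinh ((Real.pi : ℂ) * (z - w) / (2 * (δ : ℂ))) ≠ 0 :=
  sinh_ne_zero_of_abs_im_lt (sub_ne_zero.2 hzw) <| by
    rw [sub_im, abs_lt]
    constructor <;> linarith [hz.1, hz.2, hw.1, hw.2]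

theorem hasDerivAt_cmAlpha {z : ℂ} (hs : sinh ((Real.pi : ℂ) * z / (2 * (δ : ℂ))) ≠ 0) :
    HasDerivAt (cmAlpha δ) (-cmV δ z) z := by
  have hδ : (δ : ℂ) ≠ 0 := by rintro h; simp [h] at hs
  have hw : HasDerivAt (fun z : ℂ => (Real.pi : ℂ) * z / (2 * (δ : ℂ)))
      ((Real.pi : ℂ) / (2 * (δ : ℂ))) z := by
    simpa using ((hasDerivAt_id z).const_mul (Real.pi : ℂ)).div_const (2 * (δ : ℂ))
  refine ((((hasDerivAt_cosh _).comp z hw).div ((hasDerivAt_sinh _).comp z hw) hs).const_mul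
    ((Real.pi / (2 * δ) : ℝ) : ℂ)).congr_deriv ?_
  simp only [Function.comp_apply, cmV]
  push_cast
  field_simp
  linear_combination (-1) * cosh_sq_sub_sinh_sq ((Real.pi : ℂ) * z / (2 * (δ : ℂ)))

theorem cmAlpha_neg (z : ℂ) : cmAlpha δ (-z) = -cmAlpha δ z := by
  simp only [cmAlpha, mul_neg, neg_div, sinh_neg, cosh_neg, div_neg]

theorem cmV_neg (z : ℂ) : cmV δ (-z) = cmV δ z := by
  simp only [cmV, mul_neg, neg_div, sinh_neg, neg_sq]

theorem cmV'_eq_neg_two_mul {z : ℂ} (hs : sinh ((Real.pi : ℂ) * z / (2 * (δ : ℂ))) ≠ 0) :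
    cmV' δ z = -2 * cmAlpha δ z * cmV δ z := by
  rw [cmV', cmAlpha, cmV]
  field_simp

theorem continuousAt_cmV {z : ℂ} (hs : sinh ((Real.pi : ℂ) * z / (2 * (δ : ℂ))) ≠ 0) :
    ContinuousAt (cmV δ) z :=
  continuousAt_const.div (by fun_prop) (pow_ne_zero 2 hs)

theorem cmV_mul_cmAlpha_add_sub {x y : ℂ}
    (hx : sinh ((Real.pi : ℂ) * x / (2 * (δ : ℂ))) ≠ 0)
    (hy : sinh ((Real.pi : ℂ) * y / (2 * (δ : ℂ))) ≠ 0)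
    (hxy : sinh ((Real.pi : ℂ) * (x + y) / (2 * (δ : ℂ))) ≠ 0) :
    cmV δ y * (cmAlpha δ (x + y) - cmAlpha δ x) = cmV δ x * (cmAlpha δ (x + y) - cmAlpha δ y) := by
  have hsum : (Real.pi : ℂ) * (x + y) / (2 * (δ : ℂ)) =
      (Real.pi : ℂ) * x / (2 * (δ : ℂ)) + (Real.pi : ℂ) * y / (2 * (δ : ℂ)) := by ring
  rw [cmV, cmV, cmAlpha, cmAlpha, cmAlpha, hsum, sinh_add, cosh_add]
  rw [hsum, sinh_add] at hxy
  have hX := cosh_sq_sub_sinh_sq ((Real.pi : ℂ) * x / (2 * (δ : ℂ)))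
  have hY := cosh_sq_sub_sinh_sq ((Real.pi : ℂ) * y / (2 * (δ : ℂ)))
  set q : ℂ := ((Real.pi / (2 * δ) : ℝ) : ℂ)
  set SX := sinh ((Real.pi : ℂ) * x / (2 * (δ : ℂ)))
  set SY := sinh ((Real.pi : ℂ) * y / (2 * (δ : ℂ)))
  set CX := cosh ((Real.pi : ℂ) * x / (2 * (δ : ℂ)))
  set CY := cosh ((Real.pi : ℂ) * y / (2 * (δ : ℂ)))
  have hxy' : CY * SX + SY * CX ≠ 0 := by rwa [mul_comm CY, mul_comm SY]
  field_simp
  linear_combination q ^ 3 * SX * SY * (hY - hX)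

end Kernel

section PairSums

variable {ι R : Type*} [Fintype ι] [DecidableEq ι] [CommRing R]

theorem sum_erase_eq_add_sum_erase_erase {j k : ι} (hkj : k ≠ j) (f : ι → R) :
    ∑ l ∈ univ.erase k, f l = f j + ∑ l ∈ (univ.erase j).erase k, f l := by
  rw [erase_right_comm, add_sum_erase _ _ (mem_erase.2 ⟨hkj.symm, mem_univ j⟩)]

theorem sum_erase_pair_identity (c : ι → R) (β W : ι → ι → R) (hW : ∀ k l, W k l = W l k)
    (hβ : ∀ k l, β k l = -β l k)
    (htri : ∀ j k l, k ≠ j → l ≠ j → k ≠ l →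
      W k l * (β j l - β j k) = W j k * (β j l - β k l)) (j : ι) :
    ∑ k ∈ univ.erase j, β j k * ∑ l ∈ univ.erase k, (c k - c l) * W k l
        + 2 * c j * ∑ k ∈ univ.erase j, β j k * W j k =
      ∑ k ∈ univ.erase j, W j k *
        (∑ l ∈ univ.erase j, c l * β j l - ∑ l ∈ univ.erase k, c l * β k l) := by
  set E := univ.erase j
  have hswap : ∑ k ∈ E, ∑ l ∈ E.erase k, β j k * c k * W k l =
      ∑ k ∈ E, ∑ l ∈ E.erase k, β j l * c l * W k l := by
    rw [sum_comm' (t' := E) (s' := E.erase)]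
    · exact sum_congr rfl fun l _ => sum_congr rfl fun k _ => by rw [hW]
    · intro k l
      simp only [mem_erase]
      tauto
  have hinner : ∑ k ∈ E, ∑ l ∈ E.erase k, β j k * ((c k - c l) * W k l) =
      ∑ k ∈ E, ∑ l ∈ E.erase k, W j k * (c l * β j l - c l * β k l) := by
    calc _ = ∑ k ∈ E, ∑ l ∈ E.erase k, β j k * c k * W k l
            - ∑ k ∈ E, ∑ l ∈ E.erase k, β j k * c l * W k l := by
          rw [← sum_sub_distrib]
          exact sum_congr rfl fun k _ => by
            rw [← sum_sub_distrib]; exact sum_congr rfl fun l _ => by ring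
      _ = ∑ k ∈ E, ∑ l ∈ E.erase k, c l * (W k l * (β j l - β j k)) := by
          rw [hswap, ← sum_sub_distrib]
          exact sum_congr rfl fun k _ => by
            rw [← sum_sub_distrib]; exact sum_congr rfl fun l _ => by ring
      _ = _ := sum_congr rfl fun k hk => sum_congr rfl fun l hl => by
          rw [htri j k l (ne_of_mem_erase hk) (ne_of_mem_erase (mem_of_mem_erase hl))
            (ne_of_mem_erase hl).symm]
          ring
  have hlhs : ∑ k ∈ E, β j k * ∑ l ∈ univ.erase k, (c k - c l) * W k l
        + 2 * c j * ∑ k ∈ E, β j k * W j k =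
      ∑ k ∈ E, β j k * W j k * (c j + c k)
        + ∑ k ∈ E, ∑ l ∈ E.erase k, β j k * ((c k - c l) * W k l) := by
    rw [mul_sum, ← sum_add_distrib, ← sum_add_distrib]
    refine sum_congr rfl fun k hk => ?_
    rw [sum_erase_eq_add_sum_erase_erase (ne_of_mem_erase hk), hW k j, ← mul_sum]
    ring
  have hrhs : ∑ k ∈ E, W j k * (∑ l ∈ E, c l * β j l - ∑ l ∈ univ.erase k, c l * β k l) =
      ∑ k ∈ E, β j k * W j k * (c j + c k)
        + ∑ k ∈ E, ∑ l ∈ E.erase k, W j k * (c l * β j l - c l * β k l) := by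
    rw [← sum_add_distrib]
    refine sum_congr rfl fun k hk => ?_
    rw [sum_erase_eq_add_sum_erase_erase (ne_of_mem_erase hk), ← add_sum_erase _ _ hk,
      ← mul_sum, sum_sub_distrib, hβ k j]
    ring
  rw [hlhs, hrhs, hinner]

end PairSums

variable {ι : Type*} [Fintype ι] [DecidableEq ι]

theorem backlund_deriv_identity (c c' a' a'' G : ι → ℂ) (β W : ι → ι → ℂ) (lam : ℂ)
    (hW : ∀ k l, W k l = W l k) (hβ : ∀ k l, β k l = -β l k)
    (htri : ∀ j k l, k ≠ j → l ≠ j → k ≠ l →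
      W k l * (β j l - β j k) = W j k * (β j l - β k l))
    (hc' : ∀ k, c' k = 2 * I * ∑ l ∈ univ.erase k, (c k - c l) * W k l)
    (hG : ∀ k, G k = c k * a' k - (2 * lam + 2 * I * ∑ l ∈ univ.erase k, c l * β k l))
    (j : ι) (ha'' : a'' j = 8 * ∑ k ∈ univ.erase j, β j k * W j k) :
    c' j * a' j + c j * a'' j
        - 2 * I * ∑ k ∈ univ.erase j, (c' k * β j k + c k * (-W j k * (a' j - a' k))) =
      2 * I * ∑ k ∈ univ.erase j, (G j - G k) * W j k := by
  have hP := sum_erase_pair_identity c β W hW hβ htri j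
  have hc'β : 2 * I * ∑ k ∈ univ.erase j, (c' k * β j k + c k * (-W j k * (a' j - a' k))) =
      -4 * ∑ k ∈ univ.erase j, β j k * ∑ l ∈ univ.erase k, (c k - c l) * W k l
        - 2 * I * ∑ k ∈ univ.erase j, c k * W j k * (a' j - a' k) := by
    rw [mul_sum, mul_sum, mul_sum, ← sum_sub_distrib]
    exact sum_congr rfl fun k _ => by rw [hc']; linear_combination (4 * β j k *
      ∑ l ∈ univ.erase k, (c k - c l) * W k l) * I_sq
  have hc'a' : (∑ k ∈ univ.erase j, (c j - c k) * W j k) * a' j =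
      ∑ k ∈ univ.erase j, W j k * (c j * a' j - c k * a' k)
        - ∑ k ∈ univ.erase j, c k * W j k * (a' j - a' k) := by
    rw [sum_mul, ← sum_sub_distrib]
    exact sum_congr rfl fun k _ => by ring
  have hGW : 2 * I * ∑ k ∈ univ.erase j, (G j - G k) * W j k =
      2 * I * ∑ k ∈ univ.erase j, W j k * (c j * a' j - c k * a' k)
        + 4 * ∑ k ∈ univ.erase j, W j k *
          (∑ l ∈ univ.erase j, c l * β j l - ∑ l ∈ univ.erase k, c l * β k l) := by
    rw [mul_sum, mul_sum, mul_sum, ← sum_add_distrib]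
    exact sum_congr rfl fun k _ => by
      rw [hG, hG]
      linear_combination (-4 * W j k *
        (∑ l ∈ univ.erase j, c l * β j l - ∑ l ∈ univ.erase k, c l * β k l)) * I_sq
  rw [hc' j, ha'', hc'β, hGW]
  linear_combination (2 * I) * hc'a' + 4 * hP

def backlundDefect (δ lam : ℝ) (a a' c : ι → ℝ → ℂ) (j : ι) (t : ℝ) : ℂ :=
  c j t * a' j t - (2 * lam + 2 * I * ∑ k ∈ univ.erase j, c k t * cmAlpha δ (a j t - a k t))

theorem hasDerivWithinAt_backlundDefect {δ lam : ℝ} {a a' c : ι → ℝ → ℂ} {S : Set ℝ} {t : ℝ}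
    (ha' : ∀ j, HasDerivWithinAt (a j) (a' j t) S t)
    (ha'' : ∀ j, HasDerivWithinAt (a' j) (-4 * ∑ k ∈ univ.erase j, cmV' δ (a j t - a k t)) S t)
    (hc : ∀ j, HasDerivWithinAt (c j)
      (2 * I * ∑ k ∈ univ.erase j, (c j t - c k t) * cmV δ (a j t - a k t)) S t)
    (hsinh : ∀ j k, j ≠ k → sinh ((Real.pi : ℂ) * (a j t - a k t) / (2 * (δ : ℂ))) ≠ 0)
    (j : ι) :
    HasDerivWithinAt (backlundDefect δ lam a a' c j)
      (2 * I * ∑ k ∈ univ.erase j,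
        (backlundDefect δ lam a a' c j t - backlundDefect δ lam a a' c k t) *
          cmV δ (a j t - a k t)) S t := by
  have hα : ∀ k ∈ univ.erase j, HasDerivWithinAt (fun s => cmAlpha δ (a j s - a k s))
      (-cmV δ (a j t - a k t) * (a' j t - a' k t)) S t := fun k hk =>
    (hasDerivAt_cmAlpha (hsinh j k (ne_of_mem_erase hk).symm)).comp_hasDerivWithinAt
      (h := a j - a k) t ((ha' j).sub (ha' k))
  refine (((hc j).mul (ha'' j)).sub (((HasDerivWithinAt.fun_sum fun k hk =>
    (hc k).mul (hα k hk)).const_mul (2 * I)).const_add (2 * (lam : ℂ)))).congr_deriv ?_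
  refine backlund_deriv_identity (fun k => c k t) _ (fun k => a' k t)
    (fun k => -4 * ∑ l ∈ univ.erase k, cmV' δ (a k t - a l t))
    (fun k => backlundDefect δ lam a a' c k t)
    (fun p q => cmAlpha δ (a p t - a q t)) (fun p q => cmV δ (a p t - a q t)) lam
    (fun p q => by rw [← neg_sub, cmV_neg]) (fun p q => by rw [← neg_sub, cmAlpha_neg])
    (fun i k l hki hli hkl => ?_) (fun k => rfl) (fun k => rfl) j ?_
  · have h := cmV_mul_cmAlpha_add_sub (hsinh i k hki.symm) (hsinh k l hkl)
      (by rw [sub_add_sub_cancel]; exact hsinh i l hli.symm)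
    rwa [sub_add_sub_cancel] at h
  · rw [mul_sum, mul_sum]
    exact sum_congr rfl fun k hk => by
      rw [cmV'_eq_neg_two_mul (hsinh j k (ne_of_mem_erase hk).symm)]; ring

theorem eq_zero_of_hasDerivWithinAt_sum_sub_mul {g : ι → ℝ → ℂ} {W : ι → ι → ℝ → ℂ}
    {a b : ℝ} (hW : ∀ i, ∀ k ∈ univ.erase i, ContinuousOn (W i k) (Set.Icc a b))
    (hg : ∀ i, ∀ s ∈ Set.Icc a b, HasDerivWithinAt (g i)
      (∑ k ∈ univ.erase i, (g i s - g k s) * W i k s) (Set.Icc a b) s)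
    (ha : ∀ i, g i a = 0) : ∀ s ∈ Set.Icc a b, ∀ i, g i s = 0 := by
  obtain ⟨M, hM⟩ := isCompact_Icc.exists_bound_of_continuousOn
    (continuousOn_finsetSum univ fun i _ =>
      continuousOn_finsetSum _ fun k hk => (hW i k hk).norm)
  have hWM : ∀ s ∈ Set.Icc a b, ∀ i, ∑ k ∈ univ.erase i, ‖W i k s‖ ≤ M := fun s hs i =>
    calc _ ≤ ∑ p, ∑ k ∈ univ.erase p, ‖W p k s‖ :=
          single_le_sum (f := fun p => ∑ k ∈ univ.erase p, ‖W p k s‖)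
            (fun p _ => sum_nonneg fun _ _ => norm_nonneg _) (mem_univ i)
      _ ≤ M := (le_abs_self _).trans (hM s hs)
  have hbound : ∀ s ∈ Set.Ico a b, ‖fun i => ∑ k ∈ univ.erase i, (g i s - g k s) * W i k s‖
      ≤ 2 * M * ‖fun i => g i s‖ := fun s hs => by
    have hs' := Set.Ico_subset_Icc_self hs
    have hM0 : 0 ≤ M := (norm_nonneg _).trans (hM s hs')
    set gs := fun i => g i s
    refine (pi_norm_le_iff_of_nonneg (by positivity)).2 fun i => ?_
    calc _ ≤ ∑ k ∈ univ.erase i, ‖gs i - gs k‖ * ‖W i k s‖ :=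
          norm_sum_le_of_le _ fun k _ => norm_mul_le _ _
      _ ≤ ∑ k ∈ univ.erase i, 2 * ‖gs‖ * ‖W i k s‖ := sum_le_sum fun k _ =>
          mul_le_mul_of_nonneg_right ((norm_sub_le _ _).trans
            (by linarith [norm_le_pi_norm gs i, norm_le_pi_norm gs k])) (norm_nonneg _)
      _ ≤ 2 * ‖gs‖ * M := by rw [← mul_sum]; gcongr; exact hWM s hs' i
      _ = 2 * M * ‖gs‖ := by ring
  have hzero := eq_zero_of_abs_deriv_le_mul_abs_self_of_eq_zero_right (f := fun s i => g i s)
    (continuousOn_pi.2 fun i s hs => (hg i s hs).continuousWithinAt)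
    (fun s hs => (hasDerivWithinAt_pi.2 fun i => hg i s (Set.Ico_subset_Icc_self hs))
      |>.mono_of_mem_nhdsWithin (Icc_mem_nhdsGE_of_mem hs))
    (funext ha) hbound
  exact fun s hs i => congrFun (hzero s hs) i

end CalogeroMoser

open CalogeroMoser

theorem imm_backlund_conserved_general
    (δ : ℝ) (N : ℕ)
    (τ : ENNReal) (lam : ℝ)
    (a a' a'' c : Fin N → ℝ → ℂ)
    (ha' : ∀ j, ∀ t ∈ timeDom τ, HasDerivWithinAt (a j) (a' j t) (timeDom τ) t)
    (ha'' : ∀ j, ∀ t ∈ timeDom τ, HasDerivWithinAt (a' j) (a'' j t) (timeDom τ) t)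
    (hCM : ∀ j, ∀ t ∈ timeDom τ,
      a'' j t = -4 * ∑ k ∈ univ.erase j, cmV' δ (a j t - a k t))
    (hc : ∀ j, ∀ t ∈ timeDom τ, HasDerivWithinAt (c j)
      (2 * Complex.I * ∑ k ∈ univ.erase j, (c j t - c k t) * cmV δ (a j t - a k t))
      (timeDom τ) t)
    (hB0 : ∀ j, c j 0 * a' j 0 =
      2 * (lam : ℂ) + 2 * Complex.I * ∑ k ∈ univ.erase j, c k 0 * cmAlpha δ (a j 0 - a k 0))
    (hstrip : ∀ t ∈ timeDom τ, ∀ j, -(3 * δ) / 2 < (a j t).im ∧ (a j t).im < -δ / 2)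
    (hdist : ∀ t ∈ timeDom τ, ∀ j k, j ≠ k → a j t ≠ a k t) :
    ∀ j, ∀ t ∈ timeDom τ, c j t * a' j t =
      2 * (lam : ℂ) + 2 * Complex.I * ∑ k ∈ univ.erase j, c k t * cmAlpha δ (a j t - a k t) := by
  have hsinh : ∀ s ∈ timeDom τ, ∀ j k, j ≠ k →
      Complex.sinh ((Real.pi : ℂ) * (a j s - a k s) / (2 * (δ : ℂ))) ≠ 0 := fun s hs j k hjk =>
    sinh_sub_ne_zero_of_mem_strip (hdist s hs j k hjk) (hstrip s hs j) (hstrip s hs k)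
  intro j t ht
  have hIcc : Set.Icc 0 t ⊆ timeDom τ := fun s hs =>
    ⟨hs.1, (ENNReal.ofReal_le_ofReal hs.2).trans_lt ht.2⟩
  rw [← sub_eq_zero]
  refine eq_zero_of_hasDerivWithinAt_sum_sub_mul (g := backlundDefect δ lam a a' c)
    (W := fun i k s => 2 * Complex.I * cmV δ (a i s - a k s)) (fun i k hk s hs => ?_)
    (fun i s hs => ?_) (fun i => sub_eq_zero.2 (hB0 i)) t ⟨ht.1, le_rfl⟩ j
  · exact continuousWithinAt_const.mul <|
      (continuousAt_cmV (hsinh s (hIcc hs) i k (ne_of_mem_erase hk).symm)).comp_continuousWithinAt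
        (f := a i - a k) (((ha' i s (hIcc hs)).continuousWithinAt.sub
          (ha' k s (hIcc hs)).continuousWithinAt).mono hIcc)
  · refine ((hasDerivWithinAt_backlundDefect (fun k => ha' k s (hIcc hs))
      (fun k => hCM k s (hIcc hs) ▸ ha'' k s (hIcc hs)) (fun k => hc k s (hIcc hs))
      (hsinh s (hIcc hs)) i).mono hIcc).congr_deriv ?_
    rw [mul_sum]
    exact sum_congr rfl fun _ _ => by ring

/-- the Bäcklund relations are propagated in time by the Calogero–Moser flow. -/
theorem imm_backlund_conserved
    (δ : ℝ) (hδ : 0 < δ) (N : ℕ) (hN : 1 ≤ N)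
    (τ : ENNReal) (hτ : 0 < τ) (lam : ℝ)
    (a a' a'' c : Fin N → ℝ → ℂ)
    (ha' : ∀ j, ∀ t ∈ timeDom τ, HasDerivWithinAt (a j) (a' j t) (timeDom τ) t)
    (ha'' : ∀ j, ∀ t ∈ timeDom τ, HasDerivWithinAt (a' j) (a'' j t) (timeDom τ) t)
    (hCM : ∀ j, ∀ t ∈ timeDom τ,
      a'' j t = -4 * ∑ k ∈ univ.erase j, cmV' δ (a j t - a k t))
    (hc : ∀ j, ∀ t ∈ timeDom τ, HasDerivWithinAt (c j)
      (2 * Complex.I * ∑ k ∈ univ.erase j, (c j t - c k t) * cmV δ (a j t - a k t))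
      (timeDom τ) t)
    (hB0 : ∀ j, c j 0 * a' j 0 =
      2 * (lam : ℂ) + 2 * Complex.I * ∑ k ∈ univ.erase j, c k 0 * cmAlpha δ (a j 0 - a k 0))
    (hC0 : ∀ j, c j 0 * ((lam : ℂ) - Complex.I * ∑ k, conj (c k 0) *
      cmAlpha δ (a j 0 - conj (a k 0) + Complex.I * (δ : ℂ))) + 1 = 0)
    (hstrip : ∀ t ∈ timeDom τ, ∀ j, -(3 * δ) / 2 < (a j t).im ∧ (a j t).im < -δ / 2)
    (hdist : ∀ t ∈ timeDom τ, ∀ j k, j ≠ k → a j t ≠ a k t) :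
    ∀ j, ∀ t ∈ timeDom τ, c j t * a' j t =
      2 * (lam : ℂ) + 2 * Complex.I * ∑ k ∈ univ.erase j, c k t * cmAlpha δ (a j t - a k t) :=
  imm_backlund_conserved_general δ N τ lam a a' a'' c ha' ha'' hCM hc hB0 hstrip hdist
end
end

section
/- Let N ≥ 1, λ ∈ ℝ with λ ≠ 0, and let a_j, c_j ∈ ℂ (1 ≤ j ≤ N) satisfy the strip condition −3δ/2 < Im a_j < −δ/2 for all j and the constraints c_j·(λ − i·Σ_{k=1}^N conj(c_k)·α(a_j − conj(a_k) + iδ)) + 1 = 0 for all j. Then Im(Σ_{j=1}^N c_j) = 0. -/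
open MeasureTheory Filter Finset ComplexConjugate

noncomputable section

/-!
Summing the constraints over `j` gives `λ Σ c_j − i Q = −N` with
`Q = Σ_{j,k} c_j conj(c_k) α(a_j − conj(a_k) + iδ)`. Since `α` is odd and commutes with
conjugation, the kernel `α(a_j − conj(a_k) + iδ)` is skew-Hermitian, so `Q` is purely imaginary
and `i Q` is real; taking imaginary parts leaves `λ Im(Σ c_j) = 0`.
-/

open Complex

lemma cmAlpha_conj (δ : ℝ) (z : ℂ) : conj (cmAlpha δ z) = cmAlpha δ (conj z) := by
  simp only [cmAlpha, map_mul, map_div₀, conj_ofReal, ← cosh_conj, ← sinh_conj, map_ofNat]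

lemma cmAlpha_neg (δ : ℝ) (z : ℂ) : cmAlpha δ (-z) = -cmAlpha δ z := by
  simp only [cmAlpha, mul_neg, neg_div, cosh_neg, sinh_neg, div_neg]

lemma conj_cmAlpha_sub_conj_add_I_mul (δ : ℝ) (a b : ℂ) :
    conj (cmAlpha δ (a - conj b + I * δ)) = -cmAlpha δ (b - conj a + I * δ) := by
  rw [cmAlpha_conj, ← cmAlpha_neg]
  congr 1
  simp only [map_add, map_sub, map_mul, conj_conj, conj_ofReal, conj_I]
  ring

lemma re_sum_mul_conj_mul_eq_zero {ι : Type*} [Fintype ι] {K : ι → ι → ℂ}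
    (hK : ∀ j k, conj (K j k) = -K k j) (c : ι → ℂ) :
    (∑ j, ∑ k, c j * conj (c k) * K j k).re = 0 := by
  set Q := ∑ j, ∑ k, c j * conj (c k) * K j k
  have hQ : conj Q = -Q := by
    calc conj Q = ∑ j, ∑ k, -(c k * conj (c j) * K k j) := by
          simp only [Q, map_sum, map_mul, conj_conj, hK]
          refine Finset.sum_congr rfl fun j _ => Finset.sum_congr rfl fun k _ => ?_
          ring
      _ = -Q := by rw [Finset.sum_comm]; simp only [Finset.sum_neg_distrib, Q]
  have := congrArg re hQ
  simp only [conj_re, neg_re] at this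
  linarith

lemma im_sum_eq_zero_of_skewHermitian_constraints {ι : Type*} [Fintype ι] {K : ι → ι → ℂ}
    (hK : ∀ j k, conj (K j k) = -K k j) {lam : ℝ} (hlam : lam ≠ 0) {c : ι → ℂ}
    (hC : ∀ j, c j * ((lam : ℂ) - I * ∑ k, conj (c k) * K j k) + 1 = 0) :
    (∑ j, c j).im = 0 := by
  set Q := ∑ j, ∑ k, c j * conj (c k) * K j k
  have hsum : (lam : ℂ) * ∑ j, c j - I * Q = -(Fintype.card ι : ℂ) := by
    calc (lam : ℂ) * ∑ j, c j - I * Q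
        = ∑ j, (c j * ((lam : ℂ) - I * ∑ k, conj (c k) * K j k) + 1) - Fintype.card ι := by
          simp only [Q, Finset.sum_add_distrib, Finset.mul_sum, Finset.sum_sub_distrib,
            Finset.sum_const, Finset.card_univ, nsmul_eq_mul, mul_one, mul_sub, mul_assoc]
          ring_nf
      _ = -(Fintype.card ι : ℂ) := by simp only [hC, Finset.sum_const_zero, zero_sub]
  have hQ : Q.re = 0 := re_sum_mul_conj_mul_eq_zero hK c
  have him := congrArg im hsum
  simp only [sub_im, mul_im, ofReal_re, ofReal_im, I_re, I_im, neg_im, natCast_im] at him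
  have : lam * (∑ j, c j).im = 0 := by linarith
  exact (mul_eq_zero.mp this).resolve_left hlam

theorem imm_sum_c_real_general
    (δ : ℝ) (N : ℕ)
    (lam : ℝ) (hlam : lam ≠ 0) (a c : Fin N → ℂ)
    (hC : ∀ j, c j * ((lam : ℂ) - Complex.I * ∑ k, conj (c k) *
      cmAlpha δ (a j - conj (a k) + Complex.I * (δ : ℂ))) + 1 = 0) :
    (∑ j, c j).im = 0 :=
  im_sum_eq_zero_of_skewHermitian_constraints
    (fun j k => conj_cmAlpha_sub_conj_add_I_mul δ (a j) (a k)) hlam hC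

/-- the constraints force the sum of the residues to be real. -/
theorem imm_sum_c_real
    (δ : ℝ) (hδ : 0 < δ) (N : ℕ) (hN : 1 ≤ N)
    (lam : ℝ) (hlam : lam ≠ 0) (a c : Fin N → ℂ)
    (hstrip : ∀ j, -(3 * δ) / 2 < (a j).im ∧ (a j).im < -δ / 2)
    (hC : ∀ j, c j * ((lam : ℂ) - Complex.I * ∑ k, conj (c k) *
      cmAlpha δ (a j - conj (a k) + Complex.I * (δ : ℂ))) + 1 = 0) :
    (∑ j, c j).im = 0 :=
  imm_sum_c_real_general δ N lam hlam a c hC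
end
end

section
/- Let p, q ∈ ℂ be such that sinh(πp/(2δ)) ≠ 0, sinh(πq/(2δ)) ≠ 0, and sinh(π(p−q)/(2δ)) ≠ 0. Then α(p)·V(q) + α(q)·V(p) = α(q−p)·(V(p) − V(q)). -/
open MeasureTheory Filter Finset ComplexConjugate

noncomputable section

/-! Both sides are `(π/(2δ))³` times a hyperbolic expression in `a = πp/(2δ)` and `b = πq/(2δ)`;
clearing the denominators `sinh a`, `sinh b`, `sinh (b - a)` leaves a polynomial identity that
follows from the subtraction formulas and `cosh² = sinh² + 1`. -/

namespace Complex

theorem sinh_sub_mul_add_cosh_mul_sinh (a b : ℂ) :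
    sinh (b - a) * (cosh a * sinh a + cosh b * sinh b) =
      cosh (b - a) * (sinh b ^ 2 - sinh a ^ 2) := by
  rw [sinh_sub, cosh_sub]
  linear_combination (sinh a * sinh b) * (cosh_sq a - cosh_sq b)

theorem coth_div_sinh_sq_add_coth_div_sinh_sq {a b : ℂ} (ha : sinh a ≠ 0) (hb : sinh b ≠ 0)
    (hba : sinh (b - a) ≠ 0) :
    cosh a / sinh a / sinh b ^ 2 + cosh b / sinh b / sinh a ^ 2 =
      cosh (b - a) / sinh (b - a) * (1 / sinh a ^ 2 - 1 / sinh b ^ 2) := by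
  field_simp
  linear_combination sinh_sub_mul_add_cosh_mul_sinh a b

end Complex

theorem cmAlpha_cmV_identity_general
    (δ : ℝ) (p q : ℂ)
    (hp : Complex.sinh ((Real.pi : ℂ) * p / (2 * (δ : ℂ))) ≠ 0)
    (hq : Complex.sinh ((Real.pi : ℂ) * q / (2 * (δ : ℂ))) ≠ 0)
    (hpq : Complex.sinh ((Real.pi : ℂ) * (p - q) / (2 * (δ : ℂ))) ≠ 0) :
    cmAlpha δ p * cmV δ q + cmAlpha δ q * cmV δ p =
      cmAlpha δ (q - p) * (cmV δ p - cmV δ q) := by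
  unfold cmAlpha cmV
  set c : ℂ := ((Real.pi / (2 * δ) : ℝ) : ℂ)
  set a := (Real.pi : ℂ) * p / (2 * (δ : ℂ))
  set b := (Real.pi : ℂ) * q / (2 * (δ : ℂ))
  have hqp : (Real.pi : ℂ) * (q - p) / (2 * (δ : ℂ)) = b - a := by ring
  have hba : Complex.sinh (b - a) ≠ 0 := by
    rwa [← neg_sub, Complex.sinh_neg, neg_ne_zero,
      show a - b = (Real.pi : ℂ) * (p - q) / (2 * (δ : ℂ)) by ring]
  rw [hqp]
  linear_combination c ^ 3 * Complex.coth_div_sinh_sq_add_coth_div_sinh_sq hp hq hba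

/-- functional identity relating `α` and `V`. -/
theorem cmAlpha_cmV_identity
    (δ : ℝ) (hδ : 0 < δ) (p q : ℂ)
    (hp : Complex.sinh ((Real.pi : ℂ) * p / (2 * (δ : ℂ))) ≠ 0)
    (hq : Complex.sinh ((Real.pi : ℂ) * q / (2 * (δ : ℂ))) ≠ 0)
    (hpq : Complex.sinh ((Real.pi : ℂ) * (p - q) / (2 * (δ : ℂ))) ≠ 0) :
    cmAlpha δ p * cmV δ q + cmAlpha δ q * cmV δ p =
      cmAlpha δ (q - p) * (cmV δ p - cmV δ q) :=
  cmAlpha_cmV_identity_general δ p q hp hq hpq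
end
end
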